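/- arXiv:1606.03429 — 2 statements merged into one kernel-verified Lean document; each statement's English description precedes it below -/
import Mathlib

section
/- Let R be a graded ring in non-negative degrees, M a graded module bounded below, N a submodule, and {x_i}_{i∈I} elements of N. Let {Σ_i c_{i,j} in(x_i) = 0}_{j∈J} be a homogeneous generating set for the syzygy module of the in(x_i), and set z_j = Σ_i c_{i,j} x_i. If the x_i generate N and each z_j admits a reduced expression in terms of the x_i, then {x_i} is a Gröbner basis for N. -/
open DirectSum

section Defs

variable {A : Type*} [CommRing A] (𝒜 : ℤ → AddSubgroup A) [GradedRing 𝒜]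
variable {M : Type*} [AddCommGroup M] [Module A M] (ℳ : ℤ → AddSubgroup M)
  [DirectSum.Decomposition ℳ]

/-- The degree of an element of a graded object: the largest `n` whose homogeneous
component is nonzero (junk value for `x = 0`). -/
noncomputable def mdeg {σ M : Type*} [AddCommMonoid M] [SetLike σ M] [AddSubmonoidClass σ M]
    (ℳ : ℤ → σ) [DirectSum.Decomposition ℳ] (x : M) : ℤ :=
  sSup {n : ℤ | (DirectSum.decompose ℳ x n : M) ≠ 0}

/-- The initial (top-degree) term of an element. -/
noncomputable def ini {σ M : Type*} [AddCommMonoid M] [SetLike σ M] [AddSubmonoidClass σ M]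
    (ℳ : ℤ → σ) [DirectSum.Decomposition ℳ] (x : M) : M :=
  (DirectSum.decompose ℳ x (mdeg ℳ x) : M)

/-- The initial submodule of a submodule `N`: generated by initial terms of nonzero
elements of `N`. -/
def iniSub (N : Submodule A M) : Submodule A M :=
  Submodule.span A {m : M | ∃ x ∈ N, x ≠ 0 ∧ ini ℳ x = m}

/-- The ring grading is supported in non-negative degrees. -/
def RingNonnegGraded : Prop := ∀ n < (0 : ℤ), ∀ a ∈ 𝒜 n, a = (0 : A)

/-- The module grading is bounded below. -/
def ModuleBddBelow : Prop := ∃ n₀ : ℤ, ∀ n < n₀, ∀ m ∈ ℳ n, m = (0 : M)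

/-- A family of elements of `N` is a Gröbner basis for `N`. -/
def IsGrobnerBasis {I : Type*} (N : Submodule A M) (x : I → M) : Prop :=
  (∀ i, x i ∈ N) ∧
    Submodule.span A (Set.range fun i => ini ℳ (x i)) = iniSub ℳ N

/-- `a` gives a reduced expression `y = ∑ aᵢ xᵢ` with `deg aᵢ + deg xᵢ ≤ deg y`. -/
def IsReducedExpr {I : Type*} (x : I → M) (y : M) (a : I →₀ A) : Prop :=
  y = a.sum (fun i c => c • x i) ∧
    ∀ i ∈ a.support, mdeg 𝒜 (a i) + mdeg ℳ (x i) ≤ mdeg ℳ y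

/-- Set version of a Gröbner basis. -/
def IsGrobnerBasisSet (N : Submodule A M) (s : Set M) : Prop :=
  s ⊆ (N : Set M) ∧ Submodule.span A (ini ℳ '' s) = iniSub ℳ N

/-- `y` has a reduced expression in terms of the elements of `s`. -/
def HasReducedExprSet (s : Set M) (y : M) : Prop :=
  ∃ a : M →₀ A, ↑a.support ⊆ s ∧ y = a.sum (fun m c => c • m) ∧
    ∀ m ∈ a.support, mdeg 𝒜 (a m) + mdeg ℳ m ≤ mdeg ℳ y

/-- A submodule is homogeneous when it contains all homogeneous components of its
elements. -/
def IsHomogSubmodule (N : Submodule A M) : Prop :=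
  ∀ x ∈ N, ∀ n : ℤ, (DirectSum.decompose ℳ x n : M) ∈ N

/-- Graded-coherent: finitely generated, and every finitely generated homogeneous
submodule is finitely presented. -/
def GradedCoherent : Prop :=
  Module.Finite A M ∧ ∀ N : Submodule A M, N.FG → IsHomogSubmodule ℳ N →
    Module.FinitePresentation A N

/-- Gröbner-coherent: graded-coherent, and every finitely generated (possibly
inhomogeneous) submodule admits a finite Gröbner basis. -/
def GrobnerCoherent : Prop :=
  GradedCoherent (A := A) ℳ ∧ ∀ N : Submodule A M, N.FG →
    ∃ s : Finset M, IsGrobnerBasisSet ℳ N ↑s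

/-- A homogeneous generating family of syzygies of the initial terms of the `x i`
(with the free module graded by `deg eᵢ = deg xᵢ`). -/
def IsHomogSyzygyGens {I J : Type*} (x : I → M) (c : J → I →₀ A) : Prop :=
  (∀ j, ∃ d : ℤ, ∀ i, c j i ∈ 𝒜 (d - mdeg ℳ (x i))) ∧
    Submodule.span A (Set.range c) =
      LinearMap.ker (Finsupp.linearCombination A fun i => ini ℳ (x i))

/-- Set version of a homogeneous generating set of syzygies of initial terms. -/
def IsHomogSyzygyGensSet (X : Set M) (C : Set (M →₀ A)) : Prop :=
  (∀ c ∈ C, ↑c.support ⊆ X) ∧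
  (∀ c ∈ C, ∃ d : ℤ, ∀ m : M, c m ∈ 𝒜 (d - mdeg ℳ m)) ∧
  Submodule.span A C =
    Finsupp.supported A A X ⊓
      LinearMap.ker (Finsupp.linearCombination A fun m : M => ini ℳ m)

/-- The elements `z = ∑ c m • m` attached to a set of syzygies `C`. -/
def zElems (C : Set (M →₀ A)) : Set M :=
  (fun c : M →₀ A => c.sum fun m coeff => coeff • m) '' C

/-- One step of Buchberger's algorithm: adjoin the `z`-elements of a homogeneous
generating set of syzygies. -/
def BuchbergerStep (X Y : Set M) : Prop :=
  ∃ C : Set (M →₀ A), IsHomogSyzygyGensSet 𝒜 ℳ X C ∧ Y = X ∪ zElems C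

end Defs

section BasicHelpers
set_option linter.unusedSectionVars false
variable {M : Type*} [AddCommGroup M] (ℳ : ℤ → AddSubgroup M) [DirectSum.Decomposition ℳ]

open DirectSum

lemma comp_finite (x : M) : {n : ℤ | (decompose ℳ x n : M) ≠ 0}.Finite := by
  classical
  apply Set.Finite.subset (DFinsupp.support (decompose ℳ x)).finite_toSet
  intro n hn
  simp only [Set.mem_setOf_eq] at hn
  simp only [Finset.mem_coe, DFinsupp.mem_support_iff]
  intro h
  exact hn (by rw [h]; rfl)

lemma comp_nonempty {x : M} (hx : x ≠ 0) :
    {n : ℤ | (decompose ℳ x n : M) ≠ 0}.Nonempty := by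
  classical
  by_contra h
  rw [Set.not_nonempty_iff_eq_empty] at h
  apply hx
  conv_lhs => rw [← DirectSum.sum_support_decompose ℳ x]
  apply Finset.sum_eq_zero
  intro n _
  by_contra h2
  exact (Set.eq_empty_iff_forall_notMem.1 h n) h2

lemma ini_ne_zero {x : M} (hx : x ≠ 0) : (decompose ℳ x (mdeg ℳ x) : M) ≠ 0 :=
  (comp_nonempty ℳ hx).csSup_mem (comp_finite ℳ x)

lemma comp_eq_zero_of_lt (x : M) {n : ℤ} (h : mdeg ℳ x < n) :
    (decompose ℳ x n : M) = 0 := by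
  by_contra h2
  exact absurd (le_csSup (comp_finite ℳ x).bddAbove h2) (not_le.2 h)

lemma mdeg_le {x : M} (hx : x ≠ 0) {D : ℤ} (h : ∀ n, D < n → (decompose ℳ x n : M) = 0) :
    mdeg ℳ x ≤ D := by
  apply csSup_le (comp_nonempty ℳ hx)
  intro n hn
  by_contra h2
  exact hn (h n (not_le.1 h2))

lemma decompose_finsetSum {ι : Type*} (s : Finset ι) (f : ι → M) (n : ℤ) :
    (decompose ℳ (∑ i ∈ s, f i) n : M) = ∑ i ∈ s, (decompose ℳ (f i) n : M) := by
  classical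
  induction s using Finset.induction with
  | empty => simp
  | insert _ _ h ih =>
    rw [Finset.sum_insert h, Finset.sum_insert h, decompose_add, DirectSum.add_apply,
      AddSubgroup.coe_add, ih]

end BasicHelpers

section SMulHelpers
set_option linter.unusedSectionVars false
variable {A M : Type*} [CommRing A] (𝒜 : ℤ → AddSubgroup A) [GradedRing 𝒜]
  [AddCommGroup M] [Module A M] (ℳ : ℤ → AddSubgroup M) [DirectSum.Decomposition ℳ]
  [SetLike.GradedSMul 𝒜 ℳ]

open DirectSum

lemma decompose_smul_homog {a : A} {e : ℤ} (ha : a ∈ 𝒜 e) (x : M) (n : ℤ) :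
    (decompose ℳ (a • x) n : M) = a • (decompose ℳ x (n - e) : M) := by
  induction x using DirectSum.Decomposition.inductionOn ℳ with
  | zero => simp
  | @homogeneous i m =>
    have hm : a • (m : M) ∈ ℳ (e + i) := SetLike.GradedSMul.smul_mem ha m.2
    by_cases hn : n = e + i
    · subst hn
      rw [decompose_of_mem_same ℳ hm]
      rw [show e + i - e = i by ring, decompose_of_mem_same ℳ m.2]
    · rw [decompose_of_mem_ne ℳ hm (fun h => hn h.symm),
        decompose_of_mem_ne ℳ m.2 (i := i) (j := n - e) (by omega), smul_zero]
  | add m m' hm hm' =>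
    rw [smul_add, decompose_add, DirectSum.add_apply, AddSubgroup.coe_add, hm, hm',
      decompose_add, DirectSum.add_apply, AddSubgroup.coe_add, smul_add]

lemma decompose_mul_homog {h : A} {e : ℤ} (hh : h ∈ 𝒜 e) (b : A) (n : ℤ) :
    (decompose 𝒜 (b * h) n : A) = (decompose 𝒜 b (n - e) : A) * h := by
  induction b using DirectSum.Decomposition.inductionOn 𝒜 with
  | zero => simp
  | @homogeneous p m =>
    have hm : (m : A) * h ∈ 𝒜 (p + e) := SetLike.mul_mem_graded m.2 hh
    by_cases hn : n = p + e
    · subst hn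
      rw [decompose_of_mem_same 𝒜 hm]
      rw [show p + e - e = p by ring, decompose_of_mem_same 𝒜 m.2]
    · rw [decompose_of_mem_ne 𝒜 hm (fun h' => hn h'.symm),
        decompose_of_mem_ne 𝒜 m.2 (i := p) (j := n - e) (by omega), zero_mul]
  | add m m' hm hm' =>
    rw [add_mul, decompose_add, DirectSum.add_apply, AddSubgroup.coe_add, hm, hm',
      decompose_add, DirectSum.add_apply, AddSubgroup.coe_add, add_mul]

lemma comp_smul_eq_zero (a : A) (x : M) {n : ℤ} (h : mdeg 𝒜 a + mdeg ℳ x < n) :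
    (decompose ℳ (a • x) n : M) = 0 := by
  classical
  have hax : a • x = ∑ p ∈ DFinsupp.support (decompose 𝒜 a), ((decompose 𝒜 a p : A) • x) := by
    conv_lhs => rw [← DirectSum.sum_support_decompose 𝒜 a]
    rw [Finset.sum_smul]
  rw [hax, decompose_finsetSum]
  apply Finset.sum_eq_zero
  intro p hp
  rw [decompose_smul_homog 𝒜 ℳ (SetLike.coe_mem _) x n]
  have hp' : p ≤ mdeg 𝒜 a := by
    apply le_csSup (comp_finite 𝒜 a).bddAbove
    simpa [DFinsupp.mem_support_iff] using fun h0 => DFinsupp.mem_support_iff.1 hp (by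
      ext; simp [h0])
  rw [comp_eq_zero_of_lt ℳ x (by omega), smul_zero]

lemma comp_smul_top (a : A) (x : M) :
    (decompose ℳ (a • x) (mdeg 𝒜 a + mdeg ℳ x) : M)
      = (decompose 𝒜 a (mdeg 𝒜 a) : A) • (decompose ℳ x (mdeg ℳ x) : M) := by
  classical
  have hax : a • x = ∑ p ∈ DFinsupp.support (decompose 𝒜 a), ((decompose 𝒜 a p : A) • x) := by
    conv_lhs => rw [← DirectSum.sum_support_decompose 𝒜 a]
    rw [Finset.sum_smul]
  rw [hax, decompose_finsetSum]
  rw [Finset.sum_eq_single (mdeg 𝒜 a)]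
  · rw [decompose_smul_homog 𝒜 ℳ (SetLike.coe_mem _) x,
      show mdeg 𝒜 a + mdeg ℳ x - mdeg 𝒜 a = mdeg ℳ x by ring]
  · intro p hp hne
    rw [decompose_smul_homog 𝒜 ℳ (SetLike.coe_mem _) x]
    have hp' : p ≤ mdeg 𝒜 a := by
      apply le_csSup (comp_finite 𝒜 a).bddAbove
      simpa [DFinsupp.mem_support_iff] using fun h0 => DFinsupp.mem_support_iff.1 hp (by
        ext; simp [h0])
    rw [comp_eq_zero_of_lt ℳ x (by omega), smul_zero]
  · intro hns
    have : decompose 𝒜 a (mdeg 𝒜 a) = 0 := by simpa using hns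
    rw [this]
    simp

end SMulHelpers


/-- If the `xᵢ` generate `N` and each `z_j = ∑ c_{i,j} xᵢ` (from a homogeneous generating
set of syzygies of the initial terms) has a reduced expression, then `{xᵢ}` is a
Gröbner basis for `N`. -/
theorem stmt_2 {A M : Type*} [CommRing A] (𝒜 : ℤ → AddSubgroup A) [GradedRing 𝒜]
    [AddCommGroup M] [Module A M] (ℳ : ℤ → AddSubgroup M) [DirectSum.Decomposition ℳ]
    [SetLike.GradedSMul 𝒜 ℳ]
    (hA : RingNonnegGraded 𝒜) (hM : ModuleBddBelow ℳ)
    {I J : Type*} (N : Submodule A M) (x : I → M) (hx : ∀ i, x i ∈ N)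
    (hgen : Submodule.span A (Set.range x) = N)
    (c : J → I →₀ A) (hc : IsHomogSyzygyGens 𝒜 ℳ x c)
    (hz : ∀ j, ∃ a : I →₀ A,
      IsReducedExpr 𝒜 ℳ x (Finsupp.linearCombination A x (c j)) a) :
    IsGrobnerBasis ℳ N x := by
  classical
  refine ⟨hx, ?_⟩
  -- each c j is a syzygy of the initial terms
  have hker : ∀ j, Finsupp.linearCombination A (fun i => ini ℳ (x i)) (c j) = 0 := by
    intro j
    have h1 : c j ∈ Submodule.span A (Set.range c) := Submodule.subset_span ⟨j, rfl⟩
    rw [hc.2] at h1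
    exact h1
  -- the degrees of the syzygies
  set d : J → ℤ := fun j => (hc.1 j).choose with hddef
  have hd : ∀ j i, c j i ∈ 𝒜 (d j - mdeg ℳ (x i)) := fun j => (hc.1 j).choose_spec
  -- components of z j = ∑ c j i • x i vanish in degrees ≥ d j
  have hzcomp : ∀ j n, d j ≤ n →
      (decompose ℳ (Finsupp.linearCombination A x (c j)) n : M) = 0 := by
    intro j n hn
    have h1 : Finsupp.linearCombination A x (c j) = ∑ i ∈ (c j).support, (c j) i • x i := by
      rw [Finsupp.linearCombination_apply]; rfl
    rw [h1, decompose_finsetSum]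
    rcases eq_or_lt_of_le hn with heq | hlt
    · -- n = d j : the top components assemble the syzygy, which vanishes
      trans ((c j).sum fun i r => r • ini ℳ (x i))
      · apply Finset.sum_congr rfl
        intro i _
        rw [decompose_smul_homog 𝒜 ℳ (hd j i),
          show n - (d j - mdeg ℳ (x i)) = mdeg ℳ (x i) by omega]
        rfl
      · rw [← Finsupp.linearCombination_apply]
        exact hker j
    · apply Finset.sum_eq_zero
      intro i _
      rw [decompose_smul_homog 𝒜 ℳ (hd j i), comp_eq_zero_of_lt ℳ (x i) (by omega), smul_zero]
  -- reduced expressions, normalized so that degrees are < d j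
  have hr : ∀ j, ∃ rj : I →₀ A,
      Finsupp.linearCombination A x rj = Finsupp.linearCombination A x (c j) ∧
      ∀ i ∈ rj.support, mdeg 𝒜 (rj i) + mdeg ℳ (x i) + 1 ≤ d j := by
    intro j
    by_cases h0 : Finsupp.linearCombination A x (c j) = 0
    · exact ⟨0, by simp [h0], by simp⟩
    · obtain ⟨rj, hr1, hr2⟩ := hz j
      refine ⟨rj, ?_, ?_⟩
      · rw [Finsupp.linearCombination_apply]
        exact hr1.symm
      · intro i hi
        have h1 := hr2 i hi
        have h2 : mdeg ℳ (Finsupp.linearCombination A x (c j)) ≤ d j - 1 := by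
          apply mdeg_le ℳ h0
          intro n hn
          exact hzcomp j n (by omega)
        omega
  choose r hr1 hr2 using hr
  -- the main claim
  have main : ∀ y : M, y ∈ N → y ≠ 0 →
      ini ℳ y ∈ Submodule.span A (Set.range fun i => ini ℳ (x i)) := by
    intro y hyN hy0
    set S : ℤ → Prop := fun D => ∃ a : I →₀ A, y = Finsupp.linearCombination A x a ∧
      ∀ i ∈ a.support, mdeg 𝒜 (a i) + mdeg ℳ (x i) ≤ D ∨ x i = 0 with hSdef
    have hcomp : ∀ (a : I →₀ A), y = Finsupp.linearCombination A x a → ∀ n : ℤ,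
        (decompose ℳ y n : M) = ∑ i ∈ a.support, (decompose ℳ (a i • x i) n : M) := by
      intro a ha n
      have h1 : y = ∑ i ∈ a.support, a i • x i := by
        rw [ha, Finsupp.linearCombination_apply]; rfl
      rw [h1, decompose_finsetSum]
    have hlow : ∀ D, S D → mdeg ℳ y ≤ D := by
      rintro D ⟨a, ha, hb⟩
      apply mdeg_le ℳ hy0
      intro n hn
      rw [hcomp a ha n]
      apply Finset.sum_eq_zero
      intro i hi
      rcases hb i hi with h | h
      · exact comp_smul_eq_zero 𝒜 ℳ _ _ (lt_of_le_of_lt h hn)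
      · rw [h, smul_zero]
        simp
    have hne : ∃ D, S D := by
      have h1 : y ∈ Submodule.span A (Set.range x) := by rw [hgen]; exact hyN
      obtain ⟨a, ha⟩ := Finsupp.mem_span_range_iff_exists_finsupp.1 h1
      by_cases hs : a.support.Nonempty
      · refine ⟨a.support.sup' hs (fun i => mdeg 𝒜 (a i) + mdeg ℳ (x i)), a, ?_, ?_⟩
        · rw [Finsupp.linearCombination_apply]
          exact ha.symm
        · intro i hi
          exact Or.inl (Finset.le_sup' (f := fun i => mdeg 𝒜 (a i) + mdeg ℳ (x i)) hi)
      · exfalso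
        apply hy0
        rw [← ha, Finsupp.sum, Finset.not_nonempty_iff_eq_empty.1 hs]
        simp
    obtain ⟨D, hDS, hDmin⟩ := Int.exists_least_of_bdd ⟨mdeg ℳ y, fun z hz => hlow z hz⟩ hne
    obtain ⟨a, ha, hb⟩ := hDS
    have hyD : mdeg ℳ y ≤ D := hlow D ⟨a, ha, hb⟩
    rcases eq_or_lt_of_le hyD with heq | hlt
    · -- D = mdeg y : read off the initial term
      show (decompose ℳ y (mdeg ℳ y) : M) ∈ _
      rw [heq, hcomp a ha D]
      apply Submodule.sum_mem
      intro i hi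
      rcases hb i hi with h | h
      · rcases eq_or_lt_of_le h with h2 | h2
        · rw [← h2, comp_smul_top 𝒜 ℳ]
          exact Submodule.smul_mem _ _ (Submodule.subset_span ⟨i, rfl⟩)
        · rw [comp_smul_eq_zero 𝒜 ℳ _ _ h2]
          exact Submodule.zero_mem _
      · rw [h, smul_zero]
        simp only [decompose_zero]
        exact Submodule.zero_mem _
    · -- mdeg y < D : use the syzygies to produce a better expression, contradiction
      exfalso
      -- the top-degree parts of the expression form a homogeneous syzygy s
      obtain ⟨s, hsval⟩ : ∃ s : I →₀ A, ∀ i,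
          s i = if mdeg 𝒜 (a i) + mdeg ℳ (x i) = D then ini 𝒜 (a i) else 0 := by
        refine ⟨Finsupp.onFinset a.support
          (fun i => if mdeg 𝒜 (a i) + mdeg ℳ (x i) = D then ini 𝒜 (a i) else 0)
          (fun i h => ?_), fun i => rfl⟩
        rw [Finsupp.mem_support_iff]
        intro h0
        apply h
        simp [h0, ini]
      have hshom : ∀ i, s i ∈ 𝒜 (D - mdeg ℳ (x i)) := by
        intro i
        rw [hsval i]
        split_ifs with h
        · rw [show D - mdeg ℳ (x i) = mdeg 𝒜 (a i) by omega]
          exact SetLike.coe_mem _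
        · exact zero_mem _
      have hsker : s ∈ LinearMap.ker (Finsupp.linearCombination A fun i => ini ℳ (x i)) := by
        rw [LinearMap.mem_ker, Finsupp.linearCombination_apply]
        have hsub : s.support ⊆ a.support := by
          intro i hi
          rw [Finsupp.mem_support_iff] at hi ⊢
          intro h0
          apply hi
          rw [hsval i, h0]
          simp [ini]
        rw [Finsupp.sum_of_support_subset s hsub (fun i r => r • ini ℳ (x i))
          (fun i _ => zero_smul A _)]
        have h1 : ∑ i ∈ a.support, s i • ini ℳ (x i)
            = ∑ i ∈ a.support, (decompose ℳ (a i • x i) D : M) := by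
          apply Finset.sum_congr rfl
          intro i hi
          rw [hsval i]
          split_ifs with h
          · rw [← h, comp_smul_top 𝒜 ℳ]
            rfl
          · rw [zero_smul]
            rcases hb i hi with h2 | h2
            · exact (comp_smul_eq_zero 𝒜 ℳ _ _ (lt_of_le_of_ne h2 h)).symm
            · rw [h2, smul_zero]
              simp
        rw [h1, ← hcomp a ha D, comp_eq_zero_of_lt ℳ y hlt]
      -- express s in terms of the syzygy generators
      obtain ⟨b, hbsum⟩ := Finsupp.mem_span_range_iff_exists_finsupp.1
        (by rw [hc.2]; exact hsker)
      -- take the homogeneous components of the coefficients b j in degree D - d j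
      obtain ⟨b', hb'val⟩ : ∃ b' : J →₀ A, ∀ j,
          b' j = (decompose 𝒜 (b j) (D - d j) : A) := by
        refine ⟨Finsupp.onFinset b.support (fun j => (decompose 𝒜 (b j) (D - d j) : A))
          (fun j h => ?_), fun j => rfl⟩
        rw [Finsupp.mem_support_iff]
        intro h0
        apply h
        simp [h0]
      have hb'sub : b'.support ⊆ b.support := by
        intro j hj
        rw [Finsupp.mem_support_iff] at hj ⊢
        intro h0
        apply hj
        rw [hb'val j, h0]
        simp
      -- s = ∑ b' j • c j
      have hb'sum : (b'.sum fun j q => q • c j) = s := by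
        ext i
        have hLHS : (b'.sum fun j q => q • c j) i = ∑ j ∈ b'.support, b' j * (c j) i := by
          rw [Finsupp.sum_apply]
          apply Finset.sum_congr rfl
          intro j _
          simp
        rw [hLHS, Finset.sum_subset hb'sub (fun j _ hj => by
          rw [Finsupp.notMem_support_iff.1 hj, zero_mul])]
        have hsi : s i = ∑ j ∈ b.support, b j * (c j) i := by
          rw [← hbsum, Finsupp.sum_apply]
          apply Finset.sum_congr rfl
          intro j _
          simp
        have h2 : s i = (decompose 𝒜 (s i) (D - mdeg ℳ (x i)) : A) :=
          (decompose_of_mem_same 𝒜 (hshom i)).symm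
        conv_rhs => rw [h2, hsi]
        rw [decompose_finsetSum]
        apply Finset.sum_congr rfl
        intro j _
        rw [decompose_mul_homog 𝒜 (hd j i),
          show D - mdeg ℳ (x i) - (d j - mdeg ℳ (x i)) = D - d j by ring, hb'val j]
      -- the new coefficients
      set a' : I →₀ A := a - s + b'.sum (fun j q => q • r j) with ha'def
      have e1 : Finsupp.linearCombination A x (b'.sum fun j q => q • r j)
          = Finsupp.linearCombination A x s := by
        conv_rhs => rw [← hb'sum]
        rw [map_finsuppSum, map_finsuppSum]
        apply Finsupp.sum_congr
        intro j _
        rw [map_smul, map_smul, hr1 j]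
      have ha' : y = Finsupp.linearCombination A x a' := by
        rw [ha'def, map_add, map_sub, e1, sub_add_cancel, ← ha]
      have hbound : ∀ i ∈ a'.support, mdeg 𝒜 (a' i) + mdeg ℳ (x i) ≤ D - 1 ∨ x i = 0 := by
        intro i hi
        by_cases hxi : x i = 0
        · exact Or.inr hxi
        left
        have hai' : a' i ≠ 0 := Finsupp.mem_support_iff.1 hi
        have hcompzero : ∀ p : ℤ, D - mdeg ℳ (x i) ≤ p → (decompose 𝒜 (a' i) p : A) = 0 := by
          intro p hp
          have hval : a' i = (a i - s i) + (b'.sum fun j q => q • r j) i := by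
            rw [ha'def, Finsupp.add_apply, Finsupp.sub_apply]
          rw [hval, decompose_add, DirectSum.add_apply, AddSubgroup.coe_add]
          have part1 : (decompose 𝒜 (a i - s i) p : A) = 0 := by
            by_cases hia : i ∈ a.support
            · rcases hb i hia with hbi | hbi
              swap
              · exact absurd hbi hxi
              rw [hsval i]
              split_ifs with hcond
              · -- s i = ini (a i) and mdeg (a i) = D - mdeg (x i)
                have hma : mdeg 𝒜 (a i) = D - mdeg ℳ (x i) := by omega
                rw [decompose_sub, DirectSum.sub_apply, AddSubgroup.coe_sub]
                rcases eq_or_lt_of_le hp with hpe | hpl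
                · rw [show p = mdeg 𝒜 (a i) by omega]
                  have hini : ini 𝒜 (a i) ∈ 𝒜 (mdeg 𝒜 (a i)) := SetLike.coe_mem _
                  rw [decompose_of_mem_same 𝒜 hini]
                  exact sub_self _
                · have hini : ini 𝒜 (a i) ∈ 𝒜 (mdeg 𝒜 (a i)) := SetLike.coe_mem _
                  rw [comp_eq_zero_of_lt 𝒜 (a i) (by omega),
                    decompose_of_mem_ne 𝒜 hini (by omega), sub_zero]
              · rw [sub_zero]
                exact comp_eq_zero_of_lt 𝒜 (a i) (by omega)
            · have h1 : a i = 0 := Finsupp.notMem_support_iff.1 hia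
              rw [hsval i, h1]
              simp [ini]
          have part2 : (decompose 𝒜 ((b'.sum fun j q => q • r j) i) p : A) = 0 := by
            have happ : (b'.sum fun j q => q • r j) i
                = ∑ j ∈ b'.support, b' j * (r j) i := by
              rw [Finsupp.sum_apply]
              apply Finset.sum_congr rfl
              intro j _
              simp
            rw [happ, decompose_finsetSum]
            apply Finset.sum_eq_zero
            intro j _
            have hb'mem : b' j ∈ 𝒜 (D - d j) := by
              rw [hb'val j]
              exact SetLike.coe_mem _
            rw [mul_comm, decompose_mul_homog 𝒜 hb'mem]
            by_cases hri : (r j) i = 0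
            · rw [hri]
              simp
            · have h3 := hr2 j i (Finsupp.mem_support_iff.2 hri)
              rw [comp_eq_zero_of_lt 𝒜 ((r j) i) (by omega), zero_mul]
          rw [part1, part2, add_zero]
        have h4 : mdeg 𝒜 (a' i) ≤ D - 1 - mdeg ℳ (x i) :=
          mdeg_le 𝒜 hai' (fun n hn => hcompzero n (by omega))
        omega
      have : D ≤ D - 1 := hDmin (D - 1) ⟨a', ha', hbound⟩
      omega
  -- finish
  apply le_antisymm
  · rw [Submodule.span_le]
    rintro m ⟨i, rfl⟩
    simp only [SetLike.mem_coe]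
    by_cases h : x i = 0
    · have h1 : ini ℳ (x i) = 0 := by rw [h]; simp [ini]
      show ini ℳ (x i) ∈ _
      rw [h1]
      exact Submodule.zero_mem _
    · exact Submodule.subset_span ⟨x i, hx i, h, rfl⟩
  · rw [iniSub, Submodule.span_le]
    rintro m ⟨y, hyN, hy0, rfl⟩
    simp only [SetLike.mem_coe]
    exact main y hyN hy0
end

section
/- Let k be a valuation ring whose value group is non-archimedean, i.e., there exist nonzero a, b ∈ k with v(a) > 0 and v(b) > n·v(a) for all natural numbers n. Let I = (ax + 1, b) ⊆ k[x], with k[x] graded by degree in x. Then the initial ideal in(I) is not finitely generated; in particular k[x] is not Gröbner-coherent. -/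
open DirectSum

/-! The constant coefficients of elements of `in(I)` form an ideal `J₀ ⊆ k`, and a nonzero
constant term of `in(f)` forces `f` itself to be a constant, so `J₀` consists of the constants
of `I`. Writing `b = aⁿ cₙ`, every `cₙ` lies in `I` because `cₙ₊₁ = cₙ₊₁ (ax + 1) - x cₙ`;
conversely, evaluating at `x = -1/a` in `k[1/a]` shows that every constant of `I` lies in some
`(cₙ)`. As `cₙ = a cₙ₊₁` with `a` not a unit, `J₀` is the union of the strictly increasing chain
`(cₙ)`, hence not finitely generated, and neither is `in(I)`. A finite Gröbner basis of `I`
would generate `in(I)`. -/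

open Polynomial

section InitialTerm

variable {σ M : Type*} [AddCommMonoid M] [SetLike σ M] [AddSubmonoidClass σ M]
  (ℳ : ℤ → σ) [DirectSum.Decomposition ℳ]

theorem le_mdeg_of_decompose_ne_zero {x : M} {n : ℤ} (h : (decompose ℳ x n : M) ≠ 0) :
    n ≤ mdeg ℳ x := by
  classical
  refine le_csSup (Set.Finite.bddAbove ?_) h
  refine (DFinsupp.support (decompose ℳ x)).finite_toSet.subset fun i hi => ?_
  simpa [DFinsupp.mem_support_iff] using hi

theorem mdeg_eq_of_mem {x : M} {n : ℤ} (hx : x ∈ ℳ n) (hx0 : x ≠ 0) : mdeg ℳ x = n := by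
  have hsupp : {i : ℤ | (decompose ℳ x i : M) ≠ 0} = {n} := by
    ext i
    simp only [Set.mem_ofPred_eq, Set.mem_singleton_iff]
    refine ⟨fun hi => ?_, fun hi => ?_⟩
    · by_contra hne
      exact hi (decompose_of_mem_ne ℳ hx (Ne.symm hne))
    · rwa [hi, decompose_of_mem_same ℳ hx]
  rw [mdeg, hsupp, csSup_singleton]

theorem ini_eq_of_mem {x : M} {n : ℤ} (hx : x ∈ ℳ n) : ini ℳ x = x := by
  by_cases hx0 : x = 0
  · simp [ini, hx0]
  · rw [ini, mdeg_eq_of_mem ℳ hx hx0, decompose_of_mem_same ℳ hx]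

theorem mem_zero_of_mdeg_eq_zero (hneg : ∀ n < 0, ∀ m ∈ ℳ n, m = 0) {x : M}
    (hx : mdeg ℳ x = 0) : x ∈ ℳ 0 := by
  classical
  have hzero : ∀ n ≠ 0, (decompose ℳ x n : M) = 0 := fun n hn => by
    by_contra h
    have hlt : n < 0 := lt_of_le_of_ne (hx ▸ le_mdeg_of_decompose_ne_zero ℳ h) hn
    exact h (hneg n hlt _ (SetLike.coe_mem _))
  rw [← sum_support_decompose ℳ x, Finset.sum_eq_single 0 (fun n _ hn => hzero n hn)
    (fun h => by simpa using h)]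
  exact SetLike.coe_mem _

end InitialTerm

theorem mem_iniSub_of_mem {A M : Type*} [CommRing A] [AddCommGroup M] [Module A M]
    (ℳ : ℤ → AddSubgroup M) [DirectSum.Decomposition ℳ] {N : Submodule A M} {x : M} {n : ℤ}
    (hxN : x ∈ N) (hx : x ∈ ℳ n) (hx0 : x ≠ 0) : x ∈ iniSub ℳ N :=
  Submodule.subset_span ⟨x, hxN, hx0, ini_eq_of_mem ℳ hx⟩

section DegreeGrading

variable {k : Type*} [CommRing k] (𝒜 : ℤ → AddSubgroup k[X]) [GradedRing 𝒜]

theorem eq_C_of_constantCoeff_ini_ne_zero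
    (hcomp : ∀ (n : ℤ) (p : k[X]), p ∈ 𝒜 n ↔ (0 ≤ n ∧ ∃ c : k, p = C c * X ^ n.toNat) ∨ p = 0)
    {x : k[X]} (h : constantCoeff (ini 𝒜 x) ≠ 0) : x = C (constantCoeff (ini 𝒜 x)) := by
  have hneg : ∀ n < 0, ∀ p ∈ 𝒜 n, p = 0 := fun n hn p hp =>
    ((hcomp n p).1 hp).resolve_left fun h => h.1.not_gt hn
  obtain ⟨hdeg, c, hc⟩ | hini := (hcomp _ _).1 (SetLike.coe_mem (decompose 𝒜 x (mdeg 𝒜 x)))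
  · have hdeg0 : mdeg 𝒜 x = 0 := by
      refine le_antisymm (Int.toNat_eq_zero.1 ?_) hdeg
      by_contra hne
      exact h (by simp [ini, hc, coeff_X_pow, Ne.symm hne])
    have hx : x ∈ 𝒜 0 := mem_zero_of_mdeg_eq_zero 𝒜 hneg hdeg0
    rw [ini_eq_of_mem 𝒜 hx]
    obtain ⟨-, c', rfl⟩ | rfl := (hcomp 0 x).1 hx <;> simp
  · exact absurd (by rw [ini, hini, map_zero]) h

theorem map_constantCoeff_iniSub_le_comap_C
    (hcomp : ∀ (n : ℤ) (p : k[X]), p ∈ 𝒜 n ↔ (0 ≤ n ∧ ∃ c : k, p = C c * X ^ n.toNat) ∨ p = 0)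
    (J : Ideal k[X]) : Ideal.map constantCoeff (iniSub 𝒜 J) ≤ J.comap C := by
  rw [Ideal.map_le_iff_le_comap, iniSub, Submodule.span_le]
  rintro _ ⟨x, hxJ, -, rfl⟩
  by_cases h : constantCoeff (ini 𝒜 x) = 0
  · simp [h]
  · rw [SetLike.mem_coe, Ideal.mem_comap, Ideal.mem_comap,
      ← eq_C_of_constantCoeff_ini_ne_zero 𝒜 hcomp h]
    exact hxJ

end DegreeGrading

section NonArchimedean

variable {k : Type*} [CommRing k] {a b : k}

theorem exists_pow_mul_mem_span_of_C_mem_span {c : k}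
    (h : C c ∈ Ideal.span {C a * X + 1, C b}) : ∃ N : ℕ, a ^ N * c ∈ Ideal.span {b} := by
  let S := Localization.Away a
  let φ : k[X] →+* S := eval₂RingHom (algebraMap k S) (-IsLocalization.Away.invSelf a)
  obtain ⟨p, q, hpq⟩ := Ideal.mem_span_pair.1 h
  have hroot : φ (C a * X + 1) = 0 := by
    simp only [φ, map_add, map_mul, coe_eval₂RingHom, eval₂_C, eval₂_X, map_one]
    rw [mul_neg, IsLocalization.Away.mul_invSelf, neg_add_cancel]
  have hc : algebraMap k S c = φ q * algebraMap k S b := by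
    have := congrArg φ hpq
    rw [map_add, map_mul, map_mul, hroot, mul_zero, zero_add] at this
    simpa [φ] using this.symm
  obtain ⟨_, ⟨N, rfl⟩, hN⟩ := (IsLocalization.algebraMap_mem_map_algebraMap_iff
    (Submonoid.powers a) S _ c).1 (hc ▸ Ideal.mul_mem_left _ _ (Ideal.mem_map_of_mem _
      (Ideal.mem_span_singleton_self b)))
  exact ⟨N, hN⟩

theorem C_mem_span_of_forall_eq_mul_succ {c : ℕ → k} (h0 : c 0 = b)
    (hstep : ∀ n, c n = a * c (n + 1)) (n : ℕ) :
    C (c n) ∈ Ideal.span {C a * X + 1, C b} := by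
  induction n with
  | zero => exact h0 ▸ Ideal.subset_span (by simp)
  | succ n ih =>
    have hid : C (c (n + 1)) = C (c (n + 1)) * (C a * X + 1) - X * C (c n) := by
      rw [hstep n, map_mul]
      ring
    rw [hid]
    exact Ideal.sub_mem _ (Ideal.mul_mem_left _ _ (Ideal.subset_span (by simp)))
      (Ideal.mul_mem_left _ _ ih)

theorem exists_mem_span_of_C_mem_span [IsDomain k] (ha : a ≠ 0) {c : ℕ → k}
    (hc : ∀ n, b = a ^ n * c n) {t : k} (h : C t ∈ Ideal.span {C a * X + 1, C b}) :
    ∃ n, t ∈ Ideal.span {c n} := by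
  obtain ⟨N, hN⟩ := exists_pow_mul_mem_span_of_C_mem_span h
  rw [hc N, Ideal.mem_span_singleton, mul_dvd_mul_iff_left (pow_ne_zero N ha)] at hN
  exact ⟨N, Ideal.mem_span_singleton.2 hN⟩

end NonArchimedean

theorem Submodule.not_fg_of_strictMono {R M : Type*} [Semiring R] [AddCommMonoid M] [Module R M]
    {N : Submodule R M} {f : ℕ → Submodule R M} (hf : StrictMono f) (hle : ∀ n, f n ≤ N)
    (hN : N ≤ ⨆ n, f n) : ¬N.FG := by
  intro hfg
  obtain ⟨_, ⟨n, rfl⟩, hn⟩ :=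
    (CompleteLattice.isCompactElement_iff_le_of_directed_sSup_le _ N).1
      ((fg_iff_compact N).1 hfg) _ (Set.range_nonempty f)
      (directedOn_range.2 hf.monotone.directed_le) hN
  exact (hf (Nat.lt_succ_self n)).not_ge ((hle (n + 1)).trans hn)

theorem stmt_16_general (k : Type*) [CommRing k] [IsDomain k]
    (a b : k) (ha : a ≠ 0) (hb : b ≠ 0) (hau : ¬IsUnit a)
    (hval : ∀ n : ℕ, ∃ c : k, ¬IsUnit c ∧ b = a ^ n * c)
    (𝒜 : ℤ → AddSubgroup (Polynomial k)) [GradedRing 𝒜]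
    (hcomp : ∀ (n : ℤ) (p : Polynomial k),
      p ∈ 𝒜 n ↔ ((0 ≤ n ∧ ∃ c : k, p = Polynomial.C c * Polynomial.X ^ n.toNat) ∨ p = 0))
    (I : Ideal (Polynomial k))
    (hI : I = Ideal.span {Polynomial.C a * Polynomial.X + 1, Polynomial.C b}) :
    ¬(iniSub 𝒜 I).FG ∧ ¬GrobnerCoherent (A := Polynomial k) 𝒜 := by
  choose c _ hc using hval
  have hc0 (n : ℕ) : c n ≠ 0 := fun h => hb (by rw [hc n, h, mul_zero])
  have hstep (n : ℕ) : c n = a * c (n + 1) :=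
    mul_left_cancel₀ (pow_ne_zero n ha) (by rw [← hc n, ← mul_assoc, ← pow_succ, ← hc])
  have hcI (n : ℕ) : C (c n) ∈ I :=
    hI ▸ C_mem_span_of_forall_eq_mul_succ (by simpa using (hc 0).symm) hstep n
  have hini : ¬(iniSub 𝒜 I).FG := by
    intro hfg
    refine Submodule.not_fg_of_strictMono (f := fun n => Ideal.span {c n})
      (strictMono_nat_of_lt_succ fun n => ?_) (fun n => ?_) (fun t ht => ?_)
      (Ideal.FG.map hfg constantCoeff)
    · exact Ideal.span_singleton_lt_span_singleton.2
        ⟨hc0 (n + 1), a, hau, by rw [hstep, mul_comm]⟩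
    · have hC : C (c n) ∈ 𝒜 0 := (hcomp 0 _).2 (Or.inl ⟨le_rfl, c n, by simp⟩)
      simpa [Ideal.span_singleton_le_iff_mem] using Ideal.mem_map_of_mem constantCoeff
        (mem_iniSub_of_mem 𝒜 (hcI n) hC (C_ne_zero.2 (hc0 n)))
    · obtain ⟨n, hn⟩ := exists_mem_span_of_C_mem_span ha hc
        (hI ▸ map_constantCoeff_iniSub_le_comap_C 𝒜 hcomp I ht)
      exact Ideal.mem_iSup_of_mem n hn
  refine ⟨hini, fun ⟨_, hGC⟩ => hini ?_⟩
  obtain ⟨s, -, hs⟩ := hGC I (hI ▸ Submodule.fg_span (Set.toFinite _))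
  exact Submodule.fg_def.2 ⟨_, s.finite_toSet.image _, hs⟩

/-- Over a valuation ring `k` with non-archimedean value group (there are `a, b ≠ 0` with
`v(a) > 0` and `v(b) > n·v(a)` for all `n`), the initial ideal of
`I = (a·x + 1, b) ⊆ k[x]` is not finitely generated; in particular `k[x]` is not
Gröbner-coherent. -/
theorem stmt_16 (k : Type*) [CommRing k] [IsDomain k] [ValuationRing k]
    (a b : k) (ha : a ≠ 0) (hb : b ≠ 0) (hau : ¬IsUnit a)
    (hval : ∀ n : ℕ, ∃ c : k, ¬IsUnit c ∧ b = a ^ n * c)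
    (𝒜 : ℤ → AddSubgroup (Polynomial k)) [GradedRing 𝒜]
    (hcomp : ∀ (n : ℤ) (p : Polynomial k),
      p ∈ 𝒜 n ↔ ((0 ≤ n ∧ ∃ c : k, p = Polynomial.C c * Polynomial.X ^ n.toNat) ∨ p = 0))
    (I : Ideal (Polynomial k))
    (hI : I = Ideal.span {Polynomial.C a * Polynomial.X + 1, Polynomial.C b}) :
    ¬(iniSub 𝒜 I).FG ∧ ¬GrobnerCoherent (A := Polynomial k) 𝒜 :=
  stmt_16_general k a b ha hb hau hval 𝒜 hcomp I hI
end
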